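/- arXiv:0903.4546 — 10 statements merged into one kernel-verified Lean document; each statement's English description precedes it below -/
import Mathlib

section
/- For every a ∈ AddCircle (1 : ℝ), the rotation map f : AddCircle 1 → AddCircle 1, f(x) = x + a, does not have the shadowing property: there exists ε > 0 such that for every δ > 0 there is a δ-pseudo-orbit (x_i)_{i≥0} of f that is not ε-traced by any point of AddCircle 1. -/
private lemma addCircle_coe_int_eq_zero (m : ℤ) : ((m : ℝ) : AddCircle (1 : ℝ)) = 0 := by
  rw [AddCircle.coe_eq_zero_iff]
  exact ⟨m, by simp⟩

private lemma addCircle_norm_coe_le_of_le {u : ℝ} (h : |u| ≤ 1/2) :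
    ‖(u : AddCircle (1 : ℝ))‖ = |u| := by
  rw [(AddCircle.norm_coe_eq_abs_iff (p := (1:ℝ)) one_ne_zero).mpr (by simpa using h)]

/-- the rotation `x ↦ x + a` of the circle `ℝ/ℤ` does not have the
shadowing property: there is `ε > 0` such that for every `δ > 0` some `δ`-pseudo-orbit
is not `ε`-traced by any point. -/
theorem addCircle_rotation_not_shadowing (a : AddCircle (1 : ℝ)) :
    ∃ ε > (0 : ℝ), ∀ δ > (0 : ℝ),
      ∃ x : ℕ → AddCircle (1 : ℝ),
        (∀ i : ℕ, dist (x i + a) (x (i + 1)) < δ) ∧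
        ∀ y : AddCircle (1 : ℝ), ¬ (∀ i : ℕ, dist ((fun z => z + a)^[i] y) (x i) < ε) := by
  refine ⟨1/4, by norm_num, fun δ hδ => ?_⟩
  set θ : ℝ := min δ (1/8) / 2 with hθdef
  have hθ0 : 0 < θ := by positivity
  have hθδ : θ < δ := by
    have : min δ (1/8) ≤ δ := min_le_left _ _
    simp only [hθdef]; linarith
  have hθ8 : θ ≤ 1/16 := by
    have : min δ (1/8) ≤ 1/8 := min_le_right _ _
    simp only [hθdef]; linarith
  refine ⟨fun i => ((i * θ : ℝ) : AddCircle (1 : ℝ)) + i • a, fun i => ?_, ?_⟩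
  · have h1 : ((i*θ : ℝ) : AddCircle (1:ℝ)) + i • a + a
        = ((i*θ : ℝ) : AddCircle (1:ℝ)) + ((i+1) • a) := by
      rw [succ_nsmul]; abel
    rw [h1, dist_add_right, dist_eq_norm, ← QuotientAddGroup.mk_sub]
    have h2 : ((i:ℝ)*θ - (↑(i+1))*θ) = -θ := by push_cast; ring
    rw [h2]
    have h3 : ‖((-θ : ℝ) : AddCircle (1:ℝ))‖ = |(-θ)| := by
      apply addCircle_norm_coe_le_of_le
      rw [abs_neg, abs_of_pos hθ0]; linarith
    rw [h3, abs_neg, abs_of_pos hθ0]; exact hθδ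
  · intro y hy
    obtain ⟨r, rfl⟩ := QuotientAddGroup.mk_surjective y
    have hiter : ∀ i : ℕ, (fun z => z + a)^[i] (r : AddCircle (1:ℝ))
        = (r : AddCircle (1:ℝ)) + i • a := by
      intro i
      induction i with
      | zero => simp
      | succ n ih => rw [Function.iterate_succ_apply', ih, succ_nsmul]; abel
    set T : ℝ := Int.fract (r + 1/2) + 1 with hTdef
    have hT1 : 1 ≤ T := by
      rw [hTdef]; have := Int.fract_nonneg (r + 1/2); linarith
    set n : ℕ := ⌈T / θ⌉₊ with hndef
    have hTθ : 0 ≤ T / θ := by positivity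
    have hn1 : T ≤ n * θ := by
      have := Nat.le_ceil (T / θ)
      calc T = (T / θ) * θ := by field_simp
        _ ≤ n * θ := by
          apply mul_le_mul_of_nonneg_right this hθ0.le
    have hn2 : (n : ℝ) * θ < T + θ := by
      have h := Nat.ceil_lt_add_one hTθ
      have : (n : ℝ) < T / θ + 1 := h
      calc (n : ℝ) * θ < (T/θ + 1) * θ := by
            apply mul_lt_mul_of_pos_right this hθ0
        _ = T + θ := by field_simp
    have key := hy n
    rw [hiter n, dist_add_right, dist_eq_norm, ← QuotientAddGroup.mk_sub] at key
    -- r - n*θ = (r + 1/2 - T) - (n*θ - T) + ... decompose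
    have hdecomp : (r - (n:ℝ)*θ : ℝ)
        = (1/2 : ℝ) + (-(↑n*θ - T)) + (↑⌊r + 1/2⌋ - 2) := by
      have hf : Int.fract (r + 1/2) = r + 1/2 - ↑⌊r + 1/2⌋ := Int.self_sub_floor _ |>.symm
      rw [hTdef, hf]; ring
    have hsplit : ((r - (n:ℝ)*θ : ℝ) : AddCircle (1:ℝ))
        = ((1/2 : ℝ) : AddCircle (1:ℝ)) + ((-(↑n*θ - T) : ℝ) : AddCircle (1:ℝ)) := by
      rw [hdecomp]
      push_cast [QuotientAddGroup.mk_add]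
      have hz : (((⌊r + 1/2⌋ : ℝ) - 2 : ℝ) : AddCircle (1:ℝ)) = 0 := by
        have h := addCircle_coe_int_eq_zero (⌊r + 1/2⌋ - 2)
        rwa [show (((⌊r + 1/2⌋ - 2 : ℤ) : ℝ)) = ((⌊r + 1/2⌋ : ℝ) - 2 : ℝ) by push_cast; ring] at h
      rw [hz, add_zero]
    have hsmall : ‖((-(↑n*θ - T) : ℝ) : AddCircle (1:ℝ))‖ < θ := by
      have habs : |(-(↑n*θ - T) : ℝ)| < θ := by
        rw [abs_neg, abs_lt]; constructor <;> linarith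
      rw [addCircle_norm_coe_le_of_le (by linarith [habs] : |(-(↑n*θ - T) : ℝ)| ≤ 1/2)]
      exact habs
    have hhalf : ‖(((1/2 : ℝ)) : AddCircle (1:ℝ))‖ = 1/2 := by
      simpa using AddCircle.norm_half_period_eq (p := (1:ℝ))
    have hlow : (1/2 : ℝ) - θ ≤ ‖((r - (n:ℝ)*θ : ℝ) : AddCircle (1:ℝ))‖ := by
      rw [hsplit]
      have htri := norm_sub_norm_le (((1/2 : ℝ) : AddCircle (1:ℝ)))
        (-(((-(↑n*θ - T) : ℝ)) : AddCircle (1:ℝ)))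
      rw [sub_neg_eq_add, norm_neg] at htri
      rw [hhalf] at htri
      linarith
    linarith [key, hlow, hθ8]
end

section
/- Let α, β ∈ ℝ be such that 1, α, β are linearly independent over ℚ. Then for every point p ∈ (AddCircle (1:ℝ))³, the orbit {p + ((t : AddCircle 1), (α·t : AddCircle 1), (β·t : AddCircle 1)) : t ∈ ℝ} of the linear flow with direction (1, α, β) is dense in (AddCircle 1)³. -/
/-!
Lift to `ℝ³`: the orbit of `0` pulls back to `H = ℝ (1, α, β) + ℤ³`. The projection
`(x, y, z) ↦ (y - α x, z - β x)` along the flow kills only vectors of `H` and maps `H` onto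
`ℤ (α, β) + ℤ²`, so `H` is dense once `ℤ (α, β) + ℤ²` is dense in `ℝ²`. For that, let `K` be its
closure. The points `(fract (n α), fract (n β))` are pairwise distinct, so `K` has arbitrarily
small nonzero elements, and a closed subgroup with this property contains a line `ℝ w`. A
functional `f` with kernel `ℝ w` maps `K` onto a dense subgroup of `ℝ`, because a cyclic image
`ℤ c` would give an integer relation between `1, α, β`; since `K ⊇ ker f`, `K` is everything.
-/

open Set Filter Topology Function Bornology

theorem eq_zero_of_intCast_add_mul_add_mul_eq_zero {α β : ℝ}
    (h : LinearIndependent ℚ ![(1 : ℝ), α, β]) {a b c : ℤ} (hrel : a + b * α + c * β = 0) :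
    a = 0 ∧ b = 0 ∧ c = 0 := by
  have hz := Fintype.linearIndependent_iff.mp (h.restrict_scalars' ℤ) ![a, b, c]
    (by simpa [Fin.sum_univ_three] using hrel)
  exact ⟨hz 0, hz 1, hz 2⟩

theorem Metric.exists_ne_dist_lt_of_injective {X : Type*} [PseudoMetricSpace X] [ProperSpace X]
    {u : ℕ → X} (hu : Injective u) (hb : IsBounded (range u)) {ε : ℝ} (hε : 0 < ε) :
    ∃ m n, u m ≠ u n ∧ dist (u m) (u n) < ε := by
  obtain ⟨a, -, φ, hφ, hlim⟩ := tendsto_subseq_of_bounded hb (mem_range_self (f := u))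
  obtain ⟨N, hN⟩ := Metric.cauchySeq_iff'.mp hlim.cauchySeq ε hε
  exact ⟨φ (N + 1), φ N, hu.ne (hφ.injective.ne N.succ_ne_self), hN _ N.le_succ⟩

section ClosedSubgroup

variable {E : Type*} [NormedAddCommGroup E] [NormedSpace ℝ E] {K : AddSubgroup E}

theorem AddSubgroup.smul_mem_of_tendsto_inv_norm_smul (hK : IsClosed (K : Set E)) {u : ℕ → E}
    (hu : ∀ n, u n ∈ K) (hu0 : Tendsto u atTop (𝓝 0)) {w : E}
    (hw : Tendsto (fun n ↦ ‖u n‖⁻¹ • u n) atTop (𝓝 w)) (t : ℝ) : t • w ∈ K := by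
  have hfract : Tendsto (fun n ↦ Int.fract (t * ‖u n‖⁻¹) • u n) atTop (𝓝 0) := by
    refine squeeze_zero_norm (fun n ↦ ?_) (tendsto_zero_iff_norm_tendsto_zero.mp hu0)
    rw [norm_smul, Real.norm_of_nonneg (Int.fract_nonneg _)]
    exact mul_le_of_le_one_left (norm_nonneg _) (Int.fract_lt_one _).le
  have hlim : Tendsto (fun n ↦ (⌊t * ‖u n‖⁻¹⌋ : ℝ) • u n) atTop (𝓝 (t • w)) := by
    have hsplit : ∀ n, (⌊t * ‖u n‖⁻¹⌋ : ℝ) • u n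
        = t • (‖u n‖⁻¹ • u n) - Int.fract (t * ‖u n‖⁻¹) • u n := by
      intro n
      rw [smul_smul, ← sub_smul, Int.self_sub_fract]
    simpa only [hsplit, sub_zero] using (hw.const_smul t).sub hfract
  refine hK.mem_of_tendsto hlim (Eventually.of_forall fun n ↦ ?_)
  rw [Int.cast_smul_eq_zsmul]
  exact K.zsmul_mem (hu n) _

theorem AddSubgroup.exists_ne_zero_forall_smul_mem [ProperSpace E] (hK : IsClosed (K : Set E))
    (hsmall : ∀ ε > 0, ∃ k ∈ K, k ≠ 0 ∧ ‖k‖ < ε) : ∃ w ≠ 0, ∀ t : ℝ, t • w ∈ K := by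
  choose u hu hu0 hlt using fun n : ℕ ↦ hsmall (1 / (n + 1)) (by positivity)
  obtain ⟨w, hw, φ, hφ, hlim⟩ := (isCompact_sphere (0 : E) 1).tendsto_subseq
    (x := fun n ↦ ‖u n‖⁻¹ • u n) fun n ↦ by simpa using norm_smul_inv_norm (𝕜 := ℝ) (hu0 n)
  have htend : Tendsto u atTop (𝓝 0) :=
    squeeze_zero_norm (fun n ↦ (hlt n).le) tendsto_one_div_add_atTop_nhds_zero_nat
  refine ⟨w, ne_zero_of_mem_sphere one_ne_zero ⟨w, hw⟩, fun t ↦ ?_⟩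
  exact K.smul_mem_of_tendsto_inv_norm_smul hK (fun n ↦ hu (φ n))
    (htend.comp hφ.tendsto_atTop) hlim t

end ClosedSubgroup

theorem AddSubgroup.dense_of_ker_le_of_dense_image {𝕜 V W : Type*} [NontriviallyNormedField 𝕜]
    [CompleteSpace 𝕜] [AddCommGroup V] [Module 𝕜 V] [TopologicalSpace V] [IsTopologicalAddGroup V]
    [ContinuousSMul 𝕜 V] [AddCommGroup W] [Module 𝕜 W] [TopologicalSpace W]
    [IsTopologicalAddGroup W] [ContinuousSMul 𝕜 W] [T2Space W] [FiniteDimensional 𝕜 W]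
    (f : V →ₗ[𝕜] W) (hf : Surjective f) {K : AddSubgroup V} (hker : ∀ v, f v = 0 → v ∈ K)
    (hdense : Dense (f '' K)) : Dense (K : Set V) := by
  have hK : f ⁻¹' (f '' K) = K := by
    refine Subset.antisymm (fun v ⟨k, hk, hfk⟩ ↦ ?_) (subset_preimage_image _ _)
    have := K.add_mem (hker (v - k) (by rw [map_sub, hfk, sub_self])) hk
    rwa [sub_add_cancel] at this
  rw [← hK]
  exact hdense.preimage (f.isOpenMap_of_finiteDimensional hf)

theorem exists_surjective_ker_subset_span {w : ℝ × ℝ} (hw : w ≠ 0) :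
    ∃ f : ℝ × ℝ →ₗ[ℝ] ℝ, Surjective f ∧ ∀ v, f v = 0 → ∃ t : ℝ, t • w = v := by
  let f : ℝ × ℝ →ₗ[ℝ] ℝ := w.2 • LinearMap.fst ℝ ℝ ℝ - w.1 • LinearMap.snd ℝ ℝ ℝ
  have hf : ∀ v : ℝ × ℝ, f v = w.2 * v.1 - w.1 * v.2 := fun v ↦ rfl
  have hc : w.1 ^ 2 + w.2 ^ 2 ≠ 0 := by
    have : w.1 ≠ 0 ∨ w.2 ≠ 0 := by
      by_contra! h0; exact hw (Prod.ext h0.1 h0.2)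
    rcases this with h | h <;> positivity
  refine ⟨f, (f.surjective_or_eq_zero).resolve_right fun h0 ↦ hc ?_, fun v hv ↦ ?_⟩
  · have := LinearMap.congr_fun h0 (w.2, -w.1)
    rw [hf] at this
    simp only [LinearMap.zero_apply] at this
    linear_combination this
  · -- `(w₁² + w₂²) v = ⟪w, v⟫ w + f v • (w₂, -w₁)`
    rw [hf] at hv
    refine ⟨(w.1 * v.1 + w.2 * v.2) / (w.1 ^ 2 + w.2 ^ 2), Prod.ext ?_ ?_⟩
    · simp only [Prod.smul_fst, smul_eq_mul]
      field_simp
      linear_combination (-w.2) * hv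
    · simp only [Prod.smul_snd, smul_eq_mul]
      field_simp
      linear_combination w.1 * hv

def kroneckerSubgroup (α β : ℝ) : AddSubgroup (ℝ × ℝ) :=
  AddSubgroup.closure {(α, β), (1, 0), (0, 1)}

section Kronecker

variable {α β : ℝ}

theorem dense_map_kroneckerSubgroup (h : LinearIndependent ℚ ![(1 : ℝ), α, β])
    {f : ℝ × ℝ →ₗ[ℝ] ℝ} (hf : f ≠ 0) :
    Dense (((kroneckerSubgroup α β).map f.toAddMonoidHom : AddSubgroup ℝ) : Set ℝ) := by
  refine (AddSubgroup.dense_or_cyclic _).resolve_right fun ⟨c, hc⟩ ↦ hf ?_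
  have hmul : ∀ x ∈ ({(α, β), (1, 0), (0, 1)} : Set (ℝ × ℝ)), ∃ n : ℤ, n • c = f x := by
    intro x hx
    rw [← AddSubgroup.mem_closure_singleton, ← hc]
    exact AddSubgroup.mem_map_of_mem _ (AddSubgroup.subset_closure hx)
  obtain ⟨k, hk⟩ := hmul (α, β) (by simp)
  obtain ⟨m, hm⟩ := hmul (1, 0) (by simp)
  obtain ⟨n, hn⟩ := hmul (0, 1) (by simp)
  have hlin : f (α, β) = α * f (1, 0) + β * f (0, 1) := by
    rw [← smul_eq_mul, ← smul_eq_mul, ← map_smul, ← map_smul, ← map_add]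
    simp
  have hbasis : f (1, 0) = 0 ∧ f (0, 1) = 0 := by
    rcases eq_or_ne c 0 with rfl | hc0
    · simp only [smul_zero] at hm hn
      exact ⟨hm.symm, hn.symm⟩
    · have hrel : ((-k : ℤ) : ℝ) + m * α + n * β = 0 := by
        apply mul_left_cancel₀ hc0
        simp only [zsmul_eq_mul] at hk hm hn
        push_cast
        linear_combination α * hm + β * hn - hk - hlin
      obtain ⟨-, rfl, rfl⟩ := eq_zero_of_intCast_add_mul_add_mul_eq_zero h hrel
      simp only [zero_smul] at hm hn
      exact ⟨hm.symm, hn.symm⟩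
  exact LinearMap.prod_ext (LinearMap.ext_ring (by simpa using hbasis.1))
    (LinearMap.ext_ring (by simpa using hbasis.2))

theorem exists_mem_kroneckerSubgroup_ne_zero_norm_lt (h : LinearIndependent ℚ ![(1 : ℝ), α, β])
    {ε : ℝ} (hε : 0 < ε) : ∃ k ∈ kroneckerSubgroup α β, k ≠ 0 ∧ ‖k‖ < ε := by
  let u : ℕ → ℝ × ℝ := fun n ↦ (Int.fract (n * α), Int.fract (n * β))
  have hmem : ∀ n, u n ∈ kroneckerSubgroup α β := by
    intro n
    have : u n = (n : ℤ) • (α, β) - ⌊n * α⌋ • (1, 0) - ⌊n * β⌋ • (0, 1) := by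
      ext <;> simp [u]
    rw [this]
    refine sub_mem (sub_mem ?_ ?_) ?_ <;>
      exact AddSubgroup.zsmul_mem _ (AddSubgroup.subset_closure (by simp)) _
  have hinj : Injective u := by
    intro m n hmn
    obtain ⟨z, hz⟩ := Int.fract_eq_fract.mp (congrArg Prod.fst hmn)
    have hrel : ((-z : ℤ) : ℝ) + ((m - n : ℤ) : ℝ) * α + ((0 : ℤ) : ℝ) * β = 0 := by
      push_cast
      linear_combination hz
    have := (eq_zero_of_intCast_add_mul_add_mul_eq_zero h hrel).2.1
    omega
  have hbdd : IsBounded (range u) := by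
    refine (Metric.isBounded_Icc (0 : ℝ × ℝ) 1).subset (range_subset_iff.mpr fun n ↦ ?_)
    exact ⟨⟨Int.fract_nonneg _, Int.fract_nonneg _⟩,
      ⟨(Int.fract_lt_one _).le, (Int.fract_lt_one _).le⟩⟩
  obtain ⟨m, n, hne, hdist⟩ := Metric.exists_ne_dist_lt_of_injective hinj hbdd hε
  exact ⟨u m - u n, sub_mem (hmem m) (hmem n), sub_ne_zero.mpr hne, by rwa [← dist_eq_norm]⟩

theorem dense_kroneckerSubgroup (h : LinearIndependent ℚ ![(1 : ℝ), α, β]) :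
    Dense (kroneckerSubgroup α β : Set (ℝ × ℝ)) := by
  let K := (kroneckerSubgroup α β).topologicalClosure
  have hEK : (kroneckerSubgroup α β : Set (ℝ × ℝ)) ⊆ K :=
    (kroneckerSubgroup α β).le_topologicalClosure
  obtain ⟨w, hw, hline⟩ := K.exists_ne_zero_forall_smul_mem
    (kroneckerSubgroup α β).isClosed_topologicalClosure fun ε hε ↦
      let ⟨k, hk, hk0, hkε⟩ := exists_mem_kroneckerSubgroup_ne_zero_norm_lt h hε
      ⟨k, hEK hk, hk0, hkε⟩
  obtain ⟨f, hf, hker⟩ := exists_surjective_ker_subset_span hw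
  have hK : Dense (K : Set (ℝ × ℝ)) := by
    refine K.dense_of_ker_le_of_dense_image f hf (fun v hv ↦ ?_) ?_
    · obtain ⟨t, rfl⟩ := hker v hv
      exact hline t
    · refine (dense_map_kroneckerSubgroup h (f := f) ?_).mono (image_mono hEK)
      rintro rfl
      obtain ⟨v, hv⟩ := hf 1
      exact zero_ne_one hv
  exact dense_closure.mp hK

theorem denseRange_linearFlow (h : LinearIndependent ℚ ![(1 : ℝ), α, β]) :
    DenseRange fun t : ℝ ↦ ((t : AddCircle (1 : ℝ)), ((α * t : ℝ) : AddCircle (1 : ℝ)),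
      ((β * t : ℝ) : AddCircle (1 : ℝ))) := by
  let mk : ℝ →+ AddCircle (1 : ℝ) := QuotientAddGroup.mk' _
  let mk3 := mk.prodMap (mk.prodMap mk)
  let flow : ℝ →ₗ[ℝ] ℝ × ℝ × ℝ := LinearMap.toSpanSingleton ℝ _ (1, α, β)
  let H := (mk3.comp flow.toAddMonoidHom).range.comap mk3
  let π : ℝ × ℝ × ℝ →ₗ[ℝ] ℝ × ℝ :=
    LinearMap.snd ℝ ℝ (ℝ × ℝ) - (LinearMap.fst ℝ ℝ (ℝ × ℝ)).smulRight (α, β)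
  have hπ : ∀ x, π x = x.2 - x.1 • (α, β) := fun x ↦ rfl
  have hint : ∀ x : ℝ × ℝ × ℝ, mk3 x = 0 → x ∈ H := fun x hx ↦ ⟨0, by simp [hx]⟩
  have hker : ∀ x, π x = 0 → x ∈ H := by
    rintro ⟨s, y⟩ hy
    rw [hπ, sub_eq_zero] at hy
    exact ⟨s, by simp [flow, ← hy]⟩
  have hπH : (kroneckerSubgroup α β : Set (ℝ × ℝ)) ⊆ π '' H := by
    refine SetLike.coe_subset_coe.mpr (show _ ≤ H.map π.toAddMonoidHom from ?_)
    refine (AddSubgroup.closure_le _).mpr ?_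
    simp only [insert_subset_iff, singleton_subset_iff, SetLike.mem_coe]
    refine ⟨?_, ?_, ?_⟩
    · exact ⟨(-1, 0, 0), hint _ (by simp [mk3, mk]), by simp [hπ]⟩
    · exact ⟨(0, 1, 0), hint _ (by simp [mk3, mk]), by simp [hπ]⟩
    · exact ⟨(0, 0, 1), hint _ (by simp [mk3, mk]), by simp [hπ]⟩
  have hH : Dense (H : Set (ℝ × ℝ × ℝ)) :=
    H.dense_of_ker_le_of_dense_image π (fun y ↦ ⟨(0, y), by simp [hπ]⟩) hker
      ((dense_kroneckerSubgroup h).mono hπH)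
  have hmk3_cont : Continuous mk3 :=
    continuous_quotient_mk'.prodMap (continuous_quotient_mk'.prodMap continuous_quotient_mk')
  have hmk3_surj : Surjective mk3 := QuotientAddGroup.mk'_surjective _ |>.prodMap
    (QuotientAddGroup.mk'_surjective _ |>.prodMap (QuotientAddGroup.mk'_surjective _))
  refine (hmk3_surj.denseRange.dense_image hmk3_cont hH).mono ?_
  rintro _ ⟨x, ⟨t, ht⟩, rfl⟩
  exact ⟨t, by rw [← ht]; simp [flow, mul_comm]; rfl⟩

end Kronecker

/-- if `1, α, β` are linearly independent over `ℚ`, every orbit of the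
linear flow with direction `(1, α, β)` on the 3-torus `(ℝ/ℤ)³` is dense. -/
theorem linear_flow_T3_orbit_dense (α β : ℝ)
    (h : LinearIndependent ℚ ![(1 : ℝ), α, β])
    (p : AddCircle (1 : ℝ) × AddCircle (1 : ℝ) × AddCircle (1 : ℝ)) :
    Dense {q : AddCircle (1 : ℝ) × AddCircle (1 : ℝ) × AddCircle (1 : ℝ) |
      ∃ t : ℝ, q = p + ((t : AddCircle (1 : ℝ)), ((α * t : ℝ) : AddCircle (1 : ℝ)),
        ((β * t : ℝ) : AddCircle (1 : ℝ)))} := by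
  refine (Dense.vadd p (denseRange_linearFlow h)).mono ?_
  rintro _ ⟨_, ⟨t, rfl⟩, rfl⟩
  exact ⟨t, rfl⟩
end

section
/- Let α, β ∈ ℝ be such that 1, α, β are linearly independent over ℚ, and let φ_t(x, y, z) = (x + t, y + αt, z + βt) be the linear flow on (AddCircle (1:ℝ))³. Then every point p ∈ (AddCircle 1)³ is recurrent: p belongs to its ω-limit set ω(p) and to its α-limit set α(p). -/
open Filter

/-- The "velocity" map of the linear flow: `t ↦ (t, αt, βt)` in the 3-torus. -/
noncomputable def vT3 (α β : ℝ) (t : ℝ) :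
    AddCircle (1 : ℝ) × AddCircle (1 : ℝ) × AddCircle (1 : ℝ) :=
  ((t : AddCircle (1 : ℝ)), ((α * t : ℝ) : AddCircle (1 : ℝ)),
    ((β * t : ℝ) : AddCircle (1 : ℝ)))

lemma vT3_add (α β : ℝ) (s t : ℝ) : vT3 α β (s + t) = vT3 α β s + vT3 α β t := by
  simp [vT3, mul_add, Prod.ext_iff]

lemma vT3_neg (α β : ℝ) (t : ℝ) : vT3 α β (-t) = - vT3 α β t := by
  simp [vT3, Prod.ext_iff]

/-- Pigeonhole recurrence: `vT3 α β n` comes arbitrarily close to `0` for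
arbitrarily large natural numbers `n`. -/
lemma vT3_small (α β : ℝ) {ε : ℝ} (hε : 0 < ε) (N : ℕ) :
    ∃ n : ℕ, N ≤ n ∧ dist (vT3 α β n) 0 < ε := by
  haveI : Fact ((0:ℝ) < 1) := ⟨one_pos⟩
  set N' := N + 1 with hN'
  -- the sequence k ↦ vT3 (k * N') has a convergent subsequence
  obtain ⟨L, _, φ, hφ, hlim⟩ :=
    isCompact_univ.tendsto_subseq (x := fun k : ℕ => vT3 α β ((k * N' : ℕ) : ℝ))
      (fun k => Set.mem_univ _)
  have : ∀ᶠ k in atTop, dist (vT3 α β ((φ k * N' : ℕ) : ℝ)) L < ε / 2 :=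
    (Metric.tendsto_nhds.mp hlim) (ε/2) (by linarith)
  obtain ⟨k, hk⟩ := this.exists
  have h2 : ∀ᶠ l in atTop, dist (vT3 α β ((φ l * N' : ℕ) : ℝ)) L < ε / 2 := this
  obtain ⟨l, hdl, hkl⟩ := (h2.and (eventually_gt_atTop k)).exists
  set i := φ k * N'
  set j := φ l * N'
  have hij : i < j := (Nat.mul_lt_mul_right (Nat.succ_pos N)).mpr (hφ hkl)
  set m := j - i with hm
  have hmN : N ≤ m := by
    have : N' ≤ m := by
      have : i + N' ≤ j := by
        calc i + N' = (φ k + 1) * N' := by ring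
        _ ≤ φ l * N' := Nat.mul_le_mul_right _ (hφ hkl)
      omega
    omega
  refine ⟨m, hmN, ?_⟩
  have hsplit : ((j : ℝ)) = (i : ℝ) + (m : ℝ) := by
    have : i + m = j := by omega
    push_cast [← this]; ring
  have hadd : vT3 α β j = vT3 α β i + vT3 α β m := by
    rw [hsplit, vT3_add]
  have : dist (vT3 α β (m : ℝ)) 0 = dist (vT3 α β (j:ℝ)) (vT3 α β (i:ℝ)) := by
    rw [hadd]
    rw [dist_eq_norm, dist_eq_norm]
    simp [add_sub_cancel_left]
  rw [this]
  calc dist (vT3 α β (j:ℝ)) (vT3 α β (i:ℝ))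
      ≤ dist (vT3 α β (j:ℝ)) L + dist L (vT3 α β (i:ℝ)) := dist_triangle _ _ _
    _ < ε/2 + ε/2 := by rw [dist_comm L]; exact add_lt_add hdl hk
    _ = ε := by ring

/-- The linear flow with direction `(1, α, β)` on the 3-torus `(ℝ/ℤ)³`. -/
noncomputable def linearFlowT3 (α β : ℝ) (t : ℝ)
    (q : AddCircle (1 : ℝ) × AddCircle (1 : ℝ) × AddCircle (1 : ℝ)) :
    AddCircle (1 : ℝ) × AddCircle (1 : ℝ) × AddCircle (1 : ℝ) :=
  (q.1 + (t : AddCircle (1 : ℝ)), q.2.1 + ((α * t : ℝ) : AddCircle (1 : ℝ)),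
    q.2.2 + ((β * t : ℝ) : AddCircle (1 : ℝ)))

lemma linearFlowT3_eq (α β t : ℝ)
    (p : AddCircle (1 : ℝ) × AddCircle (1 : ℝ) × AddCircle (1 : ℝ)) :
    linearFlowT3 α β t p = p + vT3 α β t := rfl

lemma dist_linearFlowT3 (α β t : ℝ)
    (p : AddCircle (1 : ℝ) × AddCircle (1 : ℝ) × AddCircle (1 : ℝ)) :
    dist (linearFlowT3 α β t p) p = dist (vT3 α β t) 0 := by
  rw [linearFlowT3_eq]
  simpa using dist_add_left p (vT3 α β t) 0

/-- if `1, α, β` are linearly independent over `ℚ`, every point of the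
3-torus is recurrent for the linear flow with direction `(1, α, β)`: it belongs to its
ω-limit set and to its α-limit set. -/
theorem linear_flow_T3_recurrent (α β : ℝ)
    (h : LinearIndependent ℚ ![(1 : ℝ), α, β])
    (p : AddCircle (1 : ℝ) × AddCircle (1 : ℝ) × AddCircle (1 : ℝ)) :
    p ∈ omegaLimit Filter.atTop (linearFlowT3 α β) {p} ∧
    p ∈ omegaLimit Filter.atBot (linearFlowT3 α β) {p} := by
  constructor
  · rw [mem_omegaLimit_iff_frequently]
    intro n hn
    obtain ⟨ε, hε, hball⟩ := Metric.mem_nhds_iff.mp hn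
    rw [frequently_atTop]
    intro T
    obtain ⟨m, hmN, hmd⟩ := vT3_small α β hε (max 1 ⌈T⌉₊)
    refine ⟨(m : ℝ), ?_, ⟨p, rfl, ?_⟩⟩
    · calc T ≤ (⌈T⌉₊ : ℝ) := Nat.le_ceil T
        _ ≤ (m : ℝ) := by
          exact_mod_cast le_trans (le_max_right 1 ⌈T⌉₊) hmN
    · apply hball
      simpa [Metric.mem_ball, dist_linearFlowT3] using hmd
  · rw [mem_omegaLimit_iff_frequently]
    intro n hn
    obtain ⟨ε, hε, hball⟩ := Metric.mem_nhds_iff.mp hn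
    rw [frequently_atBot]
    intro T
    obtain ⟨m, hmN, hmd⟩ := vT3_small α β hε (max 1 ⌈-T⌉₊)
    refine ⟨-(m : ℝ), ?_, ⟨p, rfl, ?_⟩⟩
    · have : T ≥ -(m : ℝ) → True := fun _ => trivial
      have h1 : -T ≤ (⌈-T⌉₊ : ℝ) := Nat.le_ceil (-T)
      have h2 : ((⌈-T⌉₊ : ℕ) : ℝ) ≤ (m : ℝ) := by
        exact_mod_cast le_trans (le_max_right 1 ⌈-T⌉₊) hmN
      linarith
    · apply hball
      have : dist (vT3 α β (-(m:ℝ))) 0 < ε := by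
        rw [vT3_neg]
        simpa [dist_eq_norm] using (by simpa [dist_eq_norm] using hmd : ‖vT3 α β (m:ℝ)‖ < ε)
      simpa [Metric.mem_ball, dist_linearFlowT3] using this
end

section
/- Let α ∈ ℝ be irrational and let φ_t(x, y, z) = (x + t, y + αt, z) be the flow on (AddCircle (1:ℝ))³ which is a linear flow with slope α in the first two coordinates and fixes the third coordinate. Then every point p ∈ (AddCircle 1)³ is recurrent: p belongs to its ω-limit set ω(p) and to its α-limit set α(p). -/
/-- The flow on `(ℝ/ℤ)³` which is the linear flow with slope `α` in the first two
coordinates and fixes the third coordinate. -/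
noncomputable def linearFlowT2xS1 (α : ℝ) (t : ℝ)
    (q : AddCircle (1 : ℝ) × AddCircle (1 : ℝ) × AddCircle (1 : ℝ)) :
    AddCircle (1 : ℝ) × AddCircle (1 : ℝ) × AddCircle (1 : ℝ) :=
  (q.1 + (t : AddCircle (1 : ℝ)), q.2.1 + ((α * t : ℝ) : AddCircle (1 : ℝ)), q.2.2)

/-!
At an integer time `k` the flow is the translation `y ↦ y + k • α` of the second coordinate,
so it suffices that the multiples of a point of a compact group return arbitrarily close to
`0` at arbitrarily large (and, applied to `-α`, arbitrarily negative) times. For that, take a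
cluster point `x` of `k ↦ k • g`: two multiples `m • g` and `n • g` close to `x` with
`n ≥ m + N` have difference `(n - m) • g` close to `0`.
-/

open Filter Topology

section CompactGroup

variable {G : Type*} [AddGroup G] [TopologicalSpace G] [IsTopologicalAddGroup G]
  [CompactSpace G]

theorem mapClusterPt_zero_zsmul_atTop (g : G) :
    MapClusterPt 0 atTop (fun k : ℤ => k • g) := by
  obtain ⟨x, -, hx⟩ := isCompact_univ.exists_mapClusterPt (f := atTop)
    (u := fun k : ℤ => k • g) (by simp)
  have hdiff : Tendsto (fun q : G × G => q.2 - q.1) (𝓝 x ×ˢ 𝓝 x) (𝓝 0) := by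
    rw [← nhds_prod_eq]
    exact (continuous_snd.sub continuous_fst).tendsto' _ _ (sub_self x)
  rw [mapClusterPt_iff_frequently]
  intro U hU
  obtain ⟨V, hV, hVU⟩ := mem_prod_self_iff.1 (hdiff hU)
  have hreturns := frequently_atTop.1 (hx.frequently hV)
  rw [frequently_atTop]
  intro N
  obtain ⟨m, -, hm⟩ := hreturns 0
  obtain ⟨n, hn, hn'⟩ := hreturns (m + N)
  refine ⟨n - m, by omega, ?_⟩
  show (n - m) • g ∈ U
  rw [sub_zsmul, ← sub_eq_add_neg]
  exact hVU (Set.mk_mem_prod hm hn')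

theorem mapClusterPt_zero_zsmul_atBot (g : G) :
    MapClusterPt 0 atBot (fun k : ℤ => k • g) := by
  refine MapClusterPt.of_comp tendsto_neg_atTop_atBot ?_
  simpa [Function.comp_def] using mapClusterPt_zero_zsmul_atTop (-g)

end CompactGroup

theorem linearFlowT2xS1_intCast (α : ℝ) (k : ℤ)
    (p : AddCircle (1 : ℝ) × AddCircle (1 : ℝ) × AddCircle (1 : ℝ)) :
    linearFlowT2xS1 α k p = (p.1, p.2.1 + k • (α : AddCircle (1 : ℝ)), p.2.2) := by
  simp [linearFlowT2xS1, mul_comm α, ← zsmul_eq_mul]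

theorem linear_flow_T2xS1_recurrent_general (α : ℝ)
    (p : AddCircle (1 : ℝ) × AddCircle (1 : ℝ) × AddCircle (1 : ℝ)) :
    p ∈ omegaLimit Filter.atTop (linearFlowT2xS1 α) {p} ∧
    p ∈ omegaLimit Filter.atBot (linearFlowT2xS1 α) {p} := by
  have hshift : ContinuousAt (fun v : AddCircle (1 : ℝ) => (p.1, p.2.1 + v, p.2.2)) 0 := by
    fun_prop
  simp only [mem_omegaLimit_singleton_iff_mapClusterPt]
  constructor
  · refine MapClusterPt.of_comp tendsto_intCast_atTop_atTop ?_
    simpa [Function.comp_def, linearFlowT2xS1_intCast] using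
      (mapClusterPt_zero_zsmul_atTop (α : AddCircle (1 : ℝ))).continuousAt_comp hshift
  · refine MapClusterPt.of_comp (tendsto_intCast_atBot_iff.2 tendsto_id) ?_
    simpa [Function.comp_def, linearFlowT2xS1_intCast] using
      (mapClusterPt_zero_zsmul_atBot (α : AddCircle (1 : ℝ))).continuousAt_comp hshift

/-- for irrational `α`, every point of `(ℝ/ℤ)³` is recurrent for the flow
`φ_t(x, y, z) = (x + t, y + αt, z)`: it belongs to its ω-limit set and to its α-limit
set. -/
theorem linear_flow_T2xS1_recurrent (α : ℝ) (hα : Irrational α)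
    (p : AddCircle (1 : ℝ) × AddCircle (1 : ℝ) × AddCircle (1 : ℝ)) :
    p ∈ omegaLimit Filter.atTop (linearFlowT2xS1 α) {p} ∧
    p ∈ omegaLimit Filter.atBot (linearFlowT2xS1 α) {p} :=
  linear_flow_T2xS1_recurrent_general α p
end

section
/- Let α, β ∈ ℝ be such that 1, α, β are linearly independent over ℚ, and let φ_t(x, y, z) = (x + t, y + αt, z + βt) be the linear flow on (AddCircle (1:ℝ))³. Then for every point p ∈ (AddCircle 1)³, the ω-limit set ω(p) equals all of (AddCircle 1)³. -/
/-!
Let `C` be the closure in `ℝ²` of the subgroup generated by `(α, β)`, `(1, 0)` and `(0, 1)`. These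
three vectors are `ℤ`-independent, so they do not span a discrete subgroup of `ℝ²`; hence `C`
accumulates at `0` and, being closed, contains a line `ℝ w`. The image of `C` under the projection
`x ↦ w₂ x₁ - w₁ x₂` along `w` contains `w₂`, `-w₁` and `w₂ α - w₁ β`; it cannot be cyclic without
an integer relation between `1, α, β`, so it is dense, and since `C` is a union of lines parallel
to `w`, `C = ℝ²`. Thus the multiples `n • (α, β)` are dense in `𝕋²`.

The orbit of `q` contains the points `φ_s (q + (0, n • (α, β)))`, which are therefore dense in
`𝕋³`. The ω-limit set of `p` is closed, nonempty by compactness and invariant, so it contains a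
dense orbit.
-/

open Filter Set Topology Submodule Module

local notation "𝕋" => AddCircle (1 : ℝ)

theorem tendsto_floor_div_mul_self {ι : Type*} {l : Filter ι} {r : ι → ℝ}
    (hr : Tendsto r l (𝓝[>] 0)) (t : ℝ) :
    Tendsto (fun i => (⌊t / r i⌋ : ℝ) * r i) l (𝓝 t) := by
  have hpos : ∀ᶠ i in l, 0 < r i := hr self_mem_nhdsWithin
  have hlow : Tendsto (fun i => t - r i) l (𝓝 t) := by
    simpa using tendsto_const_nhds.sub (tendsto_nhds_of_tendsto_nhdsWithin hr)
  refine tendsto_of_tendsto_of_tendsto_of_le_of_le' hlow tendsto_const_nhds ?_ ?_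
  · filter_upwards [hpos] with i hi
    have h := mul_le_mul_of_nonneg_right (Int.sub_one_lt_floor (t / r i)).le hi.le
    rwa [sub_mul, div_mul_cancel₀ t hi.ne', one_mul] at h
  · filter_upwards [hpos] with i hi
    exact (le_div_iff₀ hi).mp (Int.floor_le _)

section ClosedSubgroup

variable {V : Type*} [NormedAddCommGroup V] [NormedSpace ℝ V]

/-- If `c → 0` in `C` with `‖c‖⁻¹ • c → w`, then `⌊t / ‖c‖⌋ • c → t • w`. -/
theorem AddSubgroup.exists_forall_smul_mem_of_accPt_zero [ProperSpace V] {C : AddSubgroup V}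
    (hC : IsClosed (C : Set V)) (h0 : AccPt (0 : V) (𝓟 C)) :
    ∃ w : V, w ≠ 0 ∧ ∀ t : ℝ, t • w ∈ C := by
  have : (𝓝[≠] (0 : V) ⊓ 𝓟 (C : Set V)).NeBot := h0
  obtain ⟨U, hU⟩ := Ultrafilter.exists_le (𝓝[≠] (0 : V) ⊓ 𝓟 (C : Set V))
  have hne : ∀ᶠ c in (U : Filter V), c ≠ 0 := (hU.trans inf_le_left) self_mem_nhdsWithin
  have hmem : ∀ᶠ c in (U : Filter V), c ∈ C := (hU.trans inf_le_right) (mem_principal_self _)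
  have hsphere : ∀ᶠ c in (U : Filter V), ‖c‖⁻¹ • c ∈ Metric.sphere (0 : V) 1 := by
    filter_upwards [hne] with c hc
    simp [norm_smul, hc]
  obtain ⟨w, hw, hUw⟩ := (isCompact_sphere (0 : V) 1).ultrafilter_le_nhds (U.map _)
    (le_principal_iff.mpr hsphere)
  refine ⟨w, ne_zero_of_mem_unit_sphere ⟨w, hw⟩, fun t => ?_⟩
  have hnorm : Tendsto (fun c : V => ‖c‖) U (𝓝[>] 0) := by
    refine tendsto_nhdsWithin_iff.mpr
      ⟨?_, by filter_upwards [hne] with c hc using norm_pos_iff.mpr hc⟩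
    simpa using tendsto_norm_zero.mono_left (nhdsWithin_le_nhds.trans' (hU.trans inf_le_left))
  refine hC.mem_of_tendsto ((tendsto_floor_div_mul_self hnorm t).smul hUw) ?_
  filter_upwards [hne, hmem] with c hc hcC
  rw [smul_smul, mul_assoc, mul_inv_cancel₀ (norm_ne_zero_iff.mpr hc), mul_one,
    Int.cast_smul_eq_zsmul]
  exact C.zsmul_mem hcC _

theorem accPt_zero_span_int_of_finrank_lt [FiniteDimensional ℝ V] {ι : Type*} [Fintype ι]
    {v : ι → V} (hv : LinearIndependent ℤ v) (hcard : finrank ℝ V < Fintype.card ι) :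
    AccPt (0 : V) (𝓟 (span ℤ (range v) : Set V)) := by
  by_contra h
  have : DiscreteTopology (span ℤ (range v)) := by
    refine discreteTopology_of_isOpen_singleton_zero ?_
    rw [isOpen_singleton_iff_punctured_nhds, nhds_ne_subtype_eq_bot_iff]
    exact not_neBot.mp h
  have hrank := Real.finrank_eq_int_finrank_of_discrete this
  rw [Set.finrank, Set.finrank, finrank_span_eq_card hv] at hrank
  exact hcard.not_ge (hrank ▸ Submodule.finrank_le _)

end ClosedSubgroup

theorem AddSubgroup.dense_of_ker_le_of_dense_map {G H : Type*} [AddGroup G] [AddGroup H]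
    [TopologicalSpace G] [TopologicalSpace H] {f : G →+ H} (hf : IsOpenMap f) {C : AddSubgroup G}
    (hker : f.ker ≤ C) (hC : Dense (C.map f : Set H)) : Dense (C : Set G) := by
  have := hC.preimage hf
  rwa [← AddSubgroup.coe_comap, AddSubgroup.comap_map_eq_self hker] at this

theorem exists_smul_eq_of_cross_eq_zero {w x : ℝ × ℝ} (hw : w ≠ 0)
    (h : w.2 * x.1 - w.1 * x.2 = 0) : ∃ t : ℝ, t • w = x := by
  rcases eq_or_ne w.1 0 with h1 | h1
  · have h2 : w.2 ≠ 0 := fun h2 => hw (Prod.ext h1 h2)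
    refine ⟨x.2 / w.2, Prod.ext ?_ ?_⟩
    · simp only [h1, zero_mul, sub_zero, mul_eq_zero, h2, false_or] at h
      simp [h1, h]
    · simp [div_mul_cancel₀ _ h2]
  · refine ⟨x.1 / w.1, Prod.ext ?_ ?_⟩
    · simp [div_mul_cancel₀ _ h1]
    · simp only [Prod.smul_snd, smul_eq_mul]
      field_simp
      linarith

section Kronecker

variable {α β : ℝ}

theorem LinearIndependent.int_relation_eq_zero (h : LinearIndependent ℚ ![(1 : ℝ), α, β])
    {p q r : ℤ} (hrel : p * α + q * β = r) : p = 0 ∧ q = 0 := by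
  have := Fintype.linearIndependent_iff.mp (h.restrict_scalars' ℤ) ![-r, p, q]
    (by simp [Fin.sum_univ_three]; linarith)
  exact ⟨this 1, this 2⟩

theorem AddSubgroup.dense_of_mem_of_linearIndependent
    (h : LinearIndependent ℚ ![(1 : ℝ), α, β]) {S : AddSubgroup ℝ} {a b : ℝ} (hab : (a, b) ≠ 0)
    (ha : a ∈ S) (hb : b ∈ S) (habS : a * α + b * β ∈ S) : Dense (S : Set ℝ) := by
  refine S.dense_or_cyclic.resolve_right ?_
  rintro ⟨c, rfl⟩
  simp only [AddSubgroup.mem_closure_singleton, zsmul_eq_mul] at ha hb habS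
  obtain ⟨p, rfl⟩ := ha
  obtain ⟨q, rfl⟩ := hb
  obtain ⟨r, hr⟩ := habS
  have hc : c ≠ 0 := by rintro rfl; simp at hab
  obtain ⟨rfl, rfl⟩ := h.int_relation_eq_zero (p := p) (q := q) (r := r)
    (mul_right_cancel₀ hc (by linear_combination -hr))
  simp at hab

def kroneckerGens (α β : ℝ) : Fin 3 → ℝ × ℝ := ![(α, β), (1, 0), (0, 1)]

theorem linearIndependent_int_kroneckerGens (h : LinearIndependent ℚ ![(1 : ℝ), α, β]) :
    LinearIndependent ℤ (kroneckerGens α β) := by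
  refine Fintype.linearIndependent_iff.mpr fun c hc => ?_
  simp only [kroneckerGens, Fin.sum_univ_three, Fin.isValue, Matrix.cons_val_zero,
    Matrix.cons_val_one, Matrix.cons_val, zsmul_eq_mul, Prod.ext_iff, Prod.fst_add, Prod.snd_add,
    Prod.fst_mul, Prod.snd_mul, Prod.fst_intCast, Prod.snd_intCast, Prod.fst_zero, Prod.snd_zero,
    mul_one, mul_zero, add_zero] at hc
  obtain ⟨hp, -⟩ := h.int_relation_eq_zero (p := c 0) (q := 0) (r := -c 1)
    (by push_cast; linarith [hc.1])
  intro i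
  fin_cases i
  · exact hp
  · simpa [hp] using hc.1
  · simpa [hp] using hc.2

theorem dense_span_kroneckerGens (h : LinearIndependent ℚ ![(1 : ℝ), α, β]) :
    Dense (span ℤ (range (kroneckerGens α β)) : Set (ℝ × ℝ)) := by
  set L := (span ℤ (range (kroneckerGens α β))).toAddSubgroup
  set C := L.topologicalClosure
  have hacc : AccPt (0 : ℝ × ℝ) (𝓟 C) :=
    (accPt_zero_span_int_of_finrank_lt (linearIndependent_int_kroneckerGens h) (by simp)).mono
      (principal_mono.mpr L.le_topologicalClosure)
  obtain ⟨w, hw, hline⟩ :=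
    C.exists_forall_smul_mem_of_accPt_zero L.isClosed_topologicalClosure hacc
  rw [← dense_closure]
  set g : ℝ × ℝ →ₗ[ℝ] ℝ := w.2 • LinearMap.fst ℝ ℝ ℝ - w.1 • LinearMap.snd ℝ ℝ ℝ
  have hg : Function.Surjective g := by
    refine LinearMap.surjective_of_ne_zero fun h => hw ?_
    have h1 := LinearMap.congr_fun h (1, 0)
    have h2 := LinearMap.congr_fun h (0, 1)
    simp only [g, LinearMap.sub_apply, LinearMap.smul_apply, LinearMap.fst_apply,
      LinearMap.snd_apply, LinearMap.zero_apply, smul_eq_mul, mul_one, mul_zero, sub_zero,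
      zero_sub, neg_eq_zero] at h1 h2
    exact Prod.ext h2 h1
  refine AddSubgroup.dense_of_ker_le_of_dense_map (f := g.toAddMonoidHom) (C := C)
    (g.isOpenMap_of_finiteDimensional hg) (fun x hx => ?_) ?_
  · obtain ⟨t, rfl⟩ := exists_smul_eq_of_cross_eq_zero hw hx
    exact hline t
  · have hmem (i : Fin 3) : g (kroneckerGens α β i) ∈ C.map g.toAddMonoidHom :=
      AddSubgroup.mem_map_of_mem _ (L.le_topologicalClosure (subset_span (mem_range_self i)))
    refine AddSubgroup.dense_of_mem_of_linearIndependent h (a := w.2) (b := -w.1)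
      (by simpa using fun h2 h1 => hw (Prod.ext h1 h2)) ?_ ?_ ?_
    · simpa [g, kroneckerGens] using hmem 1
    · simpa [g, kroneckerGens] using hmem 2
    · simpa [g, kroneckerGens, sub_eq_add_neg, neg_mul] using hmem 0

theorem denseRange_zsmul_of_linearIndependent (h : LinearIndependent ℚ ![(1 : ℝ), α, β]) :
    DenseRange fun n : ℤ => n • (((α : 𝕋), (β : 𝕋)) : 𝕋 × 𝕋) := by
  set π : ℝ × ℝ →+ 𝕋 × 𝕋 :=
    (QuotientAddGroup.mk' (AddSubgroup.zmultiples 1)).prodMap (QuotientAddGroup.mk' _)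
  have hπ : Continuous π := continuous_quotient_mk'.prodMap continuous_quotient_mk'
  have hπs : Function.Surjective π :=
    Prod.map_surjective.mpr ⟨QuotientAddGroup.mk'_surjective _, QuotientAddGroup.mk'_surjective _⟩
  refine (hπs.denseRange.dense_image hπ (dense_span_kroneckerGens h)).mono ?_
  rintro - ⟨x, hx, rfl⟩
  obtain ⟨c, rfl⟩ := (mem_span_range_iff_exists_fun ℤ).mp hx
  exact ⟨c 0, by simp [π, kroneckerGens, Fin.sum_univ_three, Prod.ext_iff]⟩

end Kronecker

theorem Flow.omegaLimit_eq_univ_of_dense_orbit {τ X : Type*} [AddCommGroup τ] [LinearOrder τ]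
    [IsOrderedAddMonoid τ] [TopologicalSpace τ] [IsTopologicalAddGroup τ] [TopologicalSpace X]
    [CompactSpace X] (ϕ : Flow τ X) (hϕ : ∀ x, Dense (ϕ.orbit x)) {s : Set X}
    (hs : s.Nonempty) : omegaLimit atTop ϕ s = univ := by
  obtain ⟨x, hx⟩ := nonempty_omegaLimit atTop ϕ s hs
  have hinv : IsInvariant ϕ (omegaLimit atTop ϕ s) :=
    ϕ.isInvariant_omegaLimit atTop s fun t => tendsto_atTop_add_const_left atTop t tendsto_id
  have horbit : ϕ.orbit x ⊆ omegaLimit atTop ϕ s := range_subset_iff.mpr fun t => hinv t hx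
  have := (isClosed_omegaLimit atTop ϕ s).closure_subset_iff.mpr horbit
  rwa [(hϕ x).closure_eq, univ_subset_iff] at this

theorem continuous_linearFlowT3 (α β : ℝ) :
    Continuous fun x : ℝ × (𝕋 × 𝕋 × 𝕋) => linearFlowT3 α β x.1 x.2 := by
  unfold linearFlowT3
  have := AddCircle.continuous_mk' (1 : ℝ)
  fun_prop

noncomputable def linearFlowT3.toFlow (α β : ℝ) : Flow ℝ (𝕋 × 𝕋 × 𝕋) where
  toFun := linearFlowT3 α β
  cont' := continuous_linearFlowT3 α β
  map_add' t₁ t₂ x := by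
    simp only [linearFlowT3, mul_add, AddCircle.coe_add, Prod.mk.injEq]
    refine ⟨?_, ?_, ?_⟩ <;> abel
  map_zero' x := by simp [linearFlowT3]

theorem linearFlowT3_intCast (α β : ℝ) (n : ℤ) (q : 𝕋 × 𝕋 × 𝕋) :
    linearFlowT3 α β n q = q + (0, n • (((α : 𝕋), (β : 𝕋)) : 𝕋 × 𝕋)) := by
  simp [linearFlowT3, Prod.ext_iff, mul_comm _ (n : ℝ), ← zsmul_eq_mul]

theorem denseRange_linearFlowT3 {α β : ℝ}
    (h : DenseRange fun n : ℤ => n • (((α : 𝕋), (β : 𝕋)) : 𝕋 × 𝕋)) (q : 𝕋 × 𝕋 × 𝕋) :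
    DenseRange fun t : ℝ => linearFlowT3 α β t q := by
  set ϕ := linearFlowT3.toFlow α β
  set Ψ : ℝ × (𝕋 × 𝕋) → 𝕋 × 𝕋 × 𝕋 := fun x => ϕ x.1 (q + (0, x.2))
  have hΨ : Continuous Ψ := by fun_prop
  have hΨs : Function.Surjective Ψ := by
    intro r
    obtain ⟨s, hs⟩ : ∃ s : ℝ, (s : 𝕋) = r.1 - q.1 := QuotientAddGroup.mk_surjective _
    refine ⟨(s, (ϕ (-s) r).2 - q.2), ?_⟩
    have : q + (0, (ϕ (-s) r).2 - q.2) = ϕ (-s) r := by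
      refine Prod.ext ?_ (add_sub_cancel _ _)
      change q.1 + 0 = r.1 + ((-s : ℝ) : 𝕋)
      rw [AddCircle.coe_neg, hs]
      abel
    simp only [Ψ, this, ← Flow.map_add, add_neg_cancel, Flow.map_zero_apply]
  refine (hΨs.denseRange.comp (denseRange_id.prodMap h) hΨ).mono ?_
  rintro - ⟨⟨s, n⟩, rfl⟩
  refine ⟨s + n, ?_⟩
  simp only [Function.comp, Prod.map, id, Ψ, ← linearFlowT3_intCast]
  exact ϕ.map_add s n q

/-- if `1, α, β` are linearly independent over `ℚ`, the ω-limit set of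
every point of the 3-torus under the linear flow with direction `(1, α, β)` is the
whole 3-torus. -/
theorem linear_flow_T3_omegaLimit_univ (α β : ℝ)
    (h : LinearIndependent ℚ ![(1 : ℝ), α, β])
    (p : AddCircle (1 : ℝ) × AddCircle (1 : ℝ) × AddCircle (1 : ℝ)) :
    omegaLimit Filter.atTop (linearFlowT3 α β) {p} = Set.univ :=
  (linearFlowT3.toFlow α β).omegaLimit_eq_univ_of_dense_orbit
    (denseRange_linearFlowT3 (denseRange_zsmul_of_linearIndependent h)) (singleton_nonempty p)
end

section
/- Let α ∈ ℝ be irrational and let φ_t(x, y, z) = (x + t, y + αt, z) be the flow on (AddCircle (1:ℝ))³ which is a linear flow with slope α in the first two coordinates and fixes the third coordinate. Then for every point p = (x, y, z) ∈ (AddCircle 1)³, the ω-limit set ω(p) equals the torus fibre {(x', y', z') ∈ (AddCircle 1)³ : z' = z}. -/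
open Filter Set

theorem AddCircle.mapClusterPt_atTop_nsmul_coe_of_irrational {a p : ℝ} [Fact (0 < p)]
    (ha : Irrational (a / p)) (c : AddCircle p) :
    MapClusterPt c atTop (fun n : ℕ ↦ n • (a : AddCircle p)) :=
  ((mapClusterPt_atTop_nsmul_tfae c (a : AddCircle p)).out 0 3).2
    (denseRange_zsmul_coe_iff.2 ha c)

theorem linearFlowT2xS1_add_natCast (α s : ℝ) (n : ℕ)
    (p : AddCircle (1 : ℝ) × AddCircle (1 : ℝ) × AddCircle (1 : ℝ)) :
    linearFlowT2xS1 α (s + n) p =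
      (p.1 + s, p.2.1 + ((α * s : ℝ) : AddCircle (1 : ℝ)) + n • (α : AddCircle (1 : ℝ)),
        p.2.2) := by
  have hn : ((n : ℝ) : AddCircle (1 : ℝ)) = 0 := by
    rw [← nsmul_one, AddCircle.coe_nsmul, AddCircle.coe_period, nsmul_zero]
  simp only [linearFlowT2xS1, mul_add, AddCircle.coe_add, hn, add_zero, add_assoc,
    ← AddCircle.coe_nsmul, nsmul_eq_mul, mul_comm]

/-- for irrational `α`, the ω-limit set of any point `(x, y, z)` of
`(ℝ/ℤ)³` under the flow `φ_t(x, y, z) = (x + t, y + αt, z)` is the torus fibre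
`{(x', y', z') : z' = z}`. -/
theorem linear_flow_T2xS1_omegaLimit (α : ℝ) (hα : Irrational α)
    (p : AddCircle (1 : ℝ) × AddCircle (1 : ℝ) × AddCircle (1 : ℝ)) :
    omegaLimit Filter.atTop (linearFlowT2xS1 α) {p} =
      {q : AddCircle (1 : ℝ) × AddCircle (1 : ℝ) × AddCircle (1 : ℝ) | q.2.2 = p.2.2} := by
  refine Subset.antisymm ?_ fun q hq ↦ ?_
  · refine (omegaLimit_subset_closure_image2 _ _ _ univ_mem).trans (closure_minimal ?_ ?_)
    · rintro _ ⟨t, -, r, rfl, rfl⟩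
      rfl
    · exact isClosed_eq (by fun_prop) continuous_const
  rw [mem_omegaLimit_singleton_iff_mapClusterPt]
  obtain ⟨s, hs⟩ := QuotientAddGroup.mk_surjective (q.1 - p.1)
  set y₀ := p.2.1 + ((α * s : ℝ) : AddCircle (1 : ℝ))
  set g : AddCircle (1 : ℝ) → _ := fun w ↦ (q.1, y₀ + w, p.2.2)
  have hgq : g (q.2.1 - y₀) = q := Prod.ext rfl (Prod.ext (add_sub_cancel y₀ q.2.1) hq.symm)
  have hflow : (fun n : ℕ ↦ linearFlowT2xS1 α (s + n) p) = g ∘ (· • (α : AddCircle (1 : ℝ))) := by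
    ext n : 1
    rw [linearFlowT2xS1_add_natCast]
    congr
    rw [hs, add_sub_cancel]
  have hcluster := (AddCircle.mapClusterPt_atTop_nsmul_coe_of_irrational (p := 1)
    (by simpa using hα) (q.2.1 - y₀)).continuousAt_comp (f := g) (by fun_prop)
  rw [hgq, ← hflow] at hcluster
  exact hcluster.of_comp (tendsto_atTop_add_const_left _ s tendsto_natCast_atTop_atTop)
end

section
/- Let λ, μ ∈ ℝ with μ ≠ 0 and λ/μ irrational, and let φ_t(z₁, z₂) = (e^{iλt} z₁, e^{iμt} z₂) be the flow on ℂ². Then for every point (z₁, z₂) ∈ ℂ² with z₁ ≠ 0 and z₂ ≠ 0, the ω-limit set ω(z₁, z₂) equals the torus {(w₁, w₂) ∈ ℂ² : |w₁| = |z₁| and |w₂| = |z₂|}. -/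
open Complex

/-- The flow `φ_t(z₁, z₂) = (e^{iλt} z₁, e^{iμt} z₂)` on `ℂ²`. -/
noncomputable def hopfFlow (lam mu : ℝ) (t : ℝ) (z : ℂ × ℂ) : ℂ × ℂ :=
  (Complex.exp ((lam * t : ℝ) * Complex.I) * z.1,
    Complex.exp ((mu * t : ℝ) * Complex.I) * z.2)

/-!
The orbit of `(z₁, z₂)` is the image of the linear flow `t ↦ (e^{iλt}, e^{iμt})` on
`S¹ × S¹` under the continuous map `(a, b) ↦ (a z₁, b z₂)` onto the torus, so it suffices that
every point of `S¹ × S¹` is a cluster point of this flow as `t → ∞`. Sampling at times spaced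
by the period `2π / |μ|` of the second factor freezes it and turns the first one into the
rotation by `2πλ / |μ|`. This angle is an irrational multiple of `2π`, so the `ℤ`-orbit of the
rotation is dense, and in a compact group the `ℕ`-orbit has the same closure.
-/

open Filter Set Topology
open scoped Real

theorem Circle.denseRange_exp_zpow {x : ℝ} (hx : Irrational (x / (2 * π))) :
    DenseRange (Circle.exp x ^ · : ℤ → Circle) := by
  have h : (Circle.exp x ^ · : ℤ → Circle) =
      AddCircle.homeomorphCircle' ∘ (· • (x : AddCircle (2 * π))) := by
    ext1 n
    simp only [Function.comp_apply, ← AddCircle.coe_zsmul, AddCircle.homeomorphCircle'_apply_mk,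
      Circle.exp_zsmul]
  rw [h]
  exact AddCircle.homeomorphCircle'.surjective.denseRange.comp
    (AddCircle.denseRange_zsmul_coe_iff.mpr hx) AddCircle.homeomorphCircle'.continuous

theorem Circle.mapClusterPt_atTop_exp_pow {x : ℝ} (hx : Irrational (x / (2 * π))) (c : Circle) :
    MapClusterPt c atTop (Circle.exp x ^ · : ℕ → Circle) :=
  ((mapClusterPt_atTop_pow_tfae c (Circle.exp x)).out 0 3).mpr
    ((Circle.denseRange_exp_zpow hx).closure_eq ▸ mem_univ c)

theorem Circle.exp_mul_natCast_mul_two_pi_div_abs {mu : ℝ} (hmu : mu ≠ 0) (n : ℕ) :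
    Circle.exp (mu * (n * (2 * π / |mu|))) = 1 := by
  rcases abs_choice mu with h | h <;> rw [h] <;> refine Circle.exp_eq_one.mpr ?_
  · exact ⟨n, by push_cast; field_simp⟩
  · exact ⟨-n, by push_cast; field_simp⟩

theorem mapClusterPt_atTop_circleExp_prod {lam mu : ℝ} (hmu : mu ≠ 0)
    (hirr : Irrational (lam / mu)) (p : Circle × Circle) :
    MapClusterPt p atTop (fun t : ℝ ↦ (Circle.exp (lam * t), Circle.exp (mu * t))) := by
  obtain ⟨a, b⟩ := p
  obtain ⟨β, rfl⟩ := Circle.exp_surjective b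
  have htimes : Tendsto (fun n : ℕ ↦ β / mu + n * (2 * π / |mu|)) atTop atTop :=
    tendsto_atTop_add_const_left _ _
      (tendsto_natCast_atTop_atTop.atTop_mul_const (by positivity))
  have hrot : Irrational (lam * (2 * π / |mu|) / (2 * π)) := by
    have : lam * (2 * π / |mu|) / (2 * π) = lam / |mu| := by field_simp
    rcases abs_choice mu with h | h <;> rw [this, h]
    · exact hirr
    · simpa only [div_neg] using hirr.neg
  set c := Circle.exp (lam * (β / mu))
  have hsampled : (fun t : ℝ ↦ (Circle.exp (lam * t), Circle.exp (mu * t))) ∘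
      (fun n : ℕ ↦ β / mu + n * (2 * π / |mu|)) =
      (fun u ↦ (c * u, Circle.exp β)) ∘ (Circle.exp (lam * (2 * π / |mu|)) ^ · : ℕ → Circle) := by
    ext1 n
    simp only [Function.comp_apply, mul_add, Circle.exp_add,
      Circle.exp_mul_natCast_mul_two_pi_div_abs hmu, mul_div_cancel₀ β hmu, mul_one,
      mul_left_comm lam, Circle.exp_natCast_mul, c]
  have hcont : Continuous fun u : Circle ↦ (c * u, Circle.exp β) := by fun_prop
  refine MapClusterPt.of_comp htimes ?_
  rw [hsampled]
  simpa using (Circle.mapClusterPt_atTop_exp_pow hrot (c⁻¹ * a)).continuousAt_comp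
    hcont.continuousAt

theorem Circle.exists_smul_eq {z w : ℂ} (hz : z ≠ 0) (h : ‖w‖ = ‖z‖) : ∃ a : Circle, a • z = w :=
  ⟨{ val := w / z, property := mem_sphere_zero_iff_norm.2 (by simp [h, hz]) },
    div_mul_cancel₀ w hz⟩

theorem hopfFlow_eq_circleExp_smul (lam mu t : ℝ) (z : ℂ × ℂ) :
    hopfFlow lam mu t z = (Circle.exp (lam * t) • z.1, Circle.exp (mu * t) • z.2) :=
  rfl

/-- if `μ ≠ 0` and `λ/μ` is irrational, then for every `(z₁, z₂) ∈ ℂ²`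
with `z₁ ≠ 0` and `z₂ ≠ 0`, the ω-limit set under `φ_t(z₁, z₂) = (e^{iλt} z₁, e^{iμt} z₂)`
is the torus `{(w₁, w₂) : |w₁| = |z₁|, |w₂| = |z₂|}`. -/
theorem hopfFlow_omegaLimit_torus (lam mu : ℝ) (hmu : mu ≠ 0)
    (hirr : Irrational (lam / mu)) (z₁ z₂ : ℂ) (hz₁ : z₁ ≠ 0) (hz₂ : z₂ ≠ 0) :
    omegaLimit Filter.atTop (hopfFlow lam mu) {(z₁, z₂)} =
      {w : ℂ × ℂ | ‖w.1‖ = ‖z₁‖ ∧ ‖w.2‖ = ‖z₂‖} := by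
  apply Subset.antisymm
  · refine (omegaLimit_subset_closure_image2 _ _ _ univ_mem).trans (closure_minimal ?_ ?_)
    · rintro _ ⟨t, -, _, rfl, rfl⟩
      simp [hopfFlow_eq_circleExp_smul, Circle.norm_smul]
    · exact (isClosed_eq (by fun_prop) continuous_const).inter
        (isClosed_eq (by fun_prop) continuous_const)
  · rintro ⟨w₁, w₂⟩ ⟨hw₁, hw₂⟩
    obtain ⟨a, rfl⟩ := Circle.exists_smul_eq hz₁ hw₁
    obtain ⟨b, rfl⟩ := Circle.exists_smul_eq hz₂ hw₂
    have hcont : Continuous fun p : Circle × Circle ↦ (p.1 • z₁, p.2 • z₂) := by fun_prop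
    rw [mem_omegaLimit_singleton_iff_mapClusterPt]
    exact (mapClusterPt_atTop_circleExp_prod hmu hirr (a, b)).continuousAt_comp
      hcont.continuousAt
end

section
/- Let λ, μ ∈ ℝ with μ ≠ 0 and λ/μ irrational, and let φ_t(z₁, z₂) = (e^{iλt} z₁, e^{iμt} z₂) be the flow on ℂ². Then every point p = (z₁, z₂) ∈ ℂ² is recurrent: p belongs to its ω-limit set ω(p) and to its α-limit set α(p). -/
open Set Filter Real

noncomputable def hopfAuxMap (p : ℂ × ℂ) (d : ℝ) : ℂ × ℂ :=
  (Complex.exp ((2 * Real.pi * d : ℝ) * Complex.I) * p.1, p.2)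

lemma hopfAuxMap_continuous (p : ℂ × ℂ) : Continuous (hopfAuxMap p) := by
  unfold hopfAuxMap
  fun_prop

lemma hopfAuxMap_zero (p : ℂ × ℂ) : hopfAuxMap p 0 = p := by
  simp [hopfAuxMap]

lemma exp_real_add_int (x : ℝ) (m : ℤ) :
    Complex.exp (((x + m * (2 * Real.pi) : ℝ) : ℂ) * Complex.I) =
      Complex.exp ((x : ℂ) * Complex.I) := by
  push_cast
  rw [add_mul, Complex.exp_add,
    show ((m : ℂ) * (2 * (Real.pi : ℂ)) * Complex.I) = m * (2 * Real.pi * Complex.I) by ring,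
    Complex.exp_int_mul_two_pi_mul_I, mul_one]

lemma hopfFlow_eq_aux (lam mu : ℝ) (hmu : mu ≠ 0) (p : ℂ × ℂ) (k m : ℤ) :
    hopfFlow lam mu (2 * Real.pi * k / mu) p =
      hopfAuxMap p ((k : ℝ) * (lam / mu) - m) := by
  have h1 : lam * (2 * Real.pi * k / mu) =
      2 * Real.pi * ((k : ℝ) * (lam / mu) - m) + m * (2 * Real.pi) := by
    field_simp; ring
  have h2 : mu * (2 * Real.pi * k / mu) = (0 : ℝ) + k * (2 * Real.pi) := by
    field_simp; ring
  unfold hopfFlow hopfAuxMap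
  rw [h1, h2, exp_real_add_int, exp_real_add_int]
  norm_num


lemma exists_int_approx {θ : ℝ} (hθ : Irrational θ) {δ : ℝ} (hδ : 0 < δ) (K : ℕ) :
    ∃ k m : ℤ, (K : ℤ) ≤ k ∧ |(k : ℝ) * θ - m| < δ := by
  set S : AddSubgroup ℝ :=
    { carrier := {x | ∃ a b : ℤ, x = a * θ + b}
      zero_mem' := ⟨0, 0, by simp⟩
      add_mem' := by
        rintro x y ⟨a, b, rfl⟩ ⟨c, d, rfl⟩
        exact ⟨a + c, b + d, by push_cast; ring⟩
      neg_mem' := by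
        rintro x ⟨a, b, rfl⟩
        exact ⟨-a, -b, by push_cast; ring⟩ } with hS
  have hdense : Dense (S : Set ℝ) := by
    rcases S.dense_or_cyclic with h | ⟨a, ha⟩
    · exact h
    · exfalso
      have h1 : (1 : ℝ) ∈ S := ⟨0, 1, by simp⟩
      have h2 : θ ∈ S := ⟨1, 0, by simp⟩
      rw [ha, AddSubgroup.mem_closure_singleton] at h1 h2
      obtain ⟨n, hn⟩ := h1
      obtain ⟨q, hq⟩ := h2
      rw [zsmul_eq_mul] at hn hq
      have hn0 : (n : ℝ) ≠ 0 := by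
        rintro h0
        rw [h0, zero_mul] at hn; exact one_ne_zero hn.symm
      apply hθ
      refine ⟨(q : ℚ) / (n : ℚ), ?_⟩
      have ha1 : a = 1 / (n : ℝ) := eq_one_div_of_mul_eq_one_left (by linarith [hn] : a * (n : ℝ) = 1)
      push_cast
      rw [← hq, ha1]
      ring
  have hne : (Ioo (0 : ℝ) (min δ 1)).Nonempty := Set.nonempty_Ioo.2 (by positivity)
  obtain ⟨g, hgS, hg0, hg1⟩ :
      ∃ g ∈ (S : Set ℝ), 0 < g ∧ g < min δ 1 := by
    obtain ⟨g, hgS, hg⟩ := hdense.exists_mem_open isOpen_Ioo hne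
    exact ⟨g, hgS, hg.1, hg.2⟩
  obtain ⟨a, b, hab⟩ := hgS
  have hgδ : g < δ := lt_of_lt_of_le hg1 (min_le_left _ _)
  have hgle1 : g ≤ 1 := le_of_lt (lt_of_lt_of_le hg1 (min_le_right _ _))
  have ha0 : a ≠ 0 := by
    rintro rfl
    have hgb : g = (b : ℝ) := by rw [hab]; push_cast; ring
    rw [hgb] at hg0 hg1
    have hb0 : 0 < b := by exact_mod_cast hg0
    have hb1 : (b : ℝ) < 1 := lt_of_lt_of_le hg1 (min_le_right _ _)
    have : b < 1 := by exact_mod_cast hb1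
    omega
  set n : ℤ := ⌊(K : ℝ) / g⌋ + 1 with hn
  have hnK : (K : ℤ) + 1 ≤ n := by
    have : (K : ℤ) ≤ ⌊(K : ℝ) / g⌋ := by
      rw [Int.le_floor]
      push_cast
      rw [le_div_iff₀ hg0]
      nlinarith [Nat.cast_nonneg (α := ℝ) K]
    omega
  have hn0 : (0 : ℤ) < n := by omega
  have hlow : (K : ℝ) < n * g := by
    have h1 : (K : ℝ) / g < n := by
      rw [hn]; push_cast; exact Int.lt_floor_add_one _
    calc (K : ℝ) = (K : ℝ) / g * g := by field_simp
    _ < n * g := by exact mul_lt_mul_of_pos_right h1 hg0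
  have hupp : (n : ℝ) * g ≤ K + g := by
    have h1 : (n : ℝ) ≤ (K : ℝ) / g + 1 := by
      rw [hn]; push_cast
      linarith [Int.floor_le ((K : ℝ) / g)]
    have h2 : ((K : ℝ) / g + 1) * g = K + g := by field_simp
    nlinarith
  have hkey : ∀ s : ℤ, ((n * a * s : ℤ) : ℝ) * θ - ((s * (K - n * b) : ℤ) : ℝ)
      = s * (n * g - K) := by
    intro s; push_cast; rw [hab]; ring
  have habs : |(n : ℝ) * g - K| < δ := by
    rw [abs_of_pos (by linarith)]; linarith
  rcases lt_or_gt_of_ne ha0 with hneg | hpos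
  · refine ⟨n * a * (-1), (-1) * (K - n * b), ?_, ?_⟩
    · have : 1 ≤ -a := by omega
      calc (K : ℤ) ≤ n := by omega
      _ = n * 1 := by ring
      _ ≤ n * (-a) := by exact mul_le_mul_of_nonneg_left this (le_of_lt hn0)
      _ = n * a * (-1) := by ring
    · rw [hkey]
      push_cast
      rw [show (-1 : ℝ) * ((n : ℝ) * g - K) = -((n : ℝ) * g - K) by ring, abs_neg]
      exact habs
  · refine ⟨n * a * 1, 1 * (K - n * b), ?_, ?_⟩
    · have : 1 ≤ a := by omega
      calc (K : ℤ) ≤ n := by omega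
      _ = n * 1 := by ring
      _ ≤ n * a := by exact mul_le_mul_of_nonneg_left this (le_of_lt hn0)
      _ = n * a * 1 := by ring
    · rw [hkey]
      push_cast
      rw [one_mul]
      exact habs

lemma hopf_exists_ge (lam mu : ℝ) (hmu : mu ≠ 0) (hirr : Irrational (lam / mu))
    (p : ℂ × ℂ) (U : Set (ℂ × ℂ)) (hU : U ∈ nhds p) (T : ℝ) :
    ∃ t ≥ T, hopfFlow lam mu t p ∈ U := by
  have hπ : (0 : ℝ) < Real.pi := Real.pi_pos
  -- a δ such that |d| < δ implies hopfAuxMap p d ∈ U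
  have hnhds : hopfAuxMap p ⁻¹' U ∈ nhds (0 : ℝ) :=
    (hopfAuxMap_continuous p).continuousAt.preimage_mem_nhds
      (by rw [hopfAuxMap_zero]; exact hU)
  obtain ⟨δ, hδ, hball⟩ := Metric.mem_nhds_iff.mp hnhds
  have hFU : ∀ d : ℝ, |d| < δ → hopfAuxMap p d ∈ U := by
    intro d hd
    exact hball (by simpa [Real.dist_eq] using hd)
  -- approximations with k arbitrarily large, and arbitrarily negative
  have claim : ∀ c : ℝ, ∃ k m : ℤ, c ≤ (k : ℝ) ∧ |(k : ℝ) * (lam / mu) - m| < δ := by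
    intro c
    obtain ⟨K, hK⟩ := exists_nat_ge c
    obtain ⟨k, m, hk, hkm⟩ := exists_int_approx hirr hδ K
    exact ⟨k, m, le_trans hK (by exact_mod_cast hk), hkm⟩
  have claim' : ∀ c : ℝ, ∃ k m : ℤ, (k : ℝ) ≤ c ∧ |(k : ℝ) * (lam / mu) - m| < δ := by
    intro c
    obtain ⟨k, m, hk, hkm⟩ := claim (-c)
    refine ⟨-k, -m, by push_cast; linarith, ?_⟩
    push_cast
    rw [show (-(k : ℝ)) * (lam / mu) - (-(m : ℝ)) = -((k : ℝ) * (lam / mu) - m) by ring,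
      abs_neg]
    exact hkm
  rcases lt_or_gt_of_ne hmu with hneg | hpos
  · obtain ⟨k, m, hk, hkm⟩ := claim' (T * mu / (2 * Real.pi))
    refine ⟨2 * Real.pi * k / mu, ?_, ?_⟩
    · rw [ge_iff_le, le_div_iff_of_neg hneg]
      have := (le_div_iff₀ (by positivity : (0 : ℝ) < 2 * Real.pi)).mp hk
      linarith
    · rw [hopfFlow_eq_aux lam mu hmu p k m]
      exact hFU _ hkm
  · obtain ⟨k, m, hk, hkm⟩ := claim (T * mu / (2 * Real.pi))
    refine ⟨2 * Real.pi * k / mu, ?_, ?_⟩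
    · rw [ge_iff_le, le_div_iff₀ hpos]
      have := (div_le_iff₀ (by positivity : (0 : ℝ) < 2 * Real.pi)).mp hk
      linarith
    · rw [hopfFlow_eq_aux lam mu hmu p k m]
      exact hFU _ hkm

lemma hopfFlow_neg (lam mu t : ℝ) (p : ℂ × ℂ) :
    hopfFlow lam mu (-t) p = hopfFlow (-lam) (-mu) t p := by
  unfold hopfFlow
  norm_num

lemma hopf_exists_le (lam mu : ℝ) (hmu : mu ≠ 0) (hirr : Irrational (lam / mu))
    (p : ℂ × ℂ) (U : Set (ℂ × ℂ)) (hU : U ∈ nhds p) (T : ℝ) :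
    ∃ t ≤ T, hopfFlow lam mu t p ∈ U := by
  obtain ⟨t, ht, htU⟩ := hopf_exists_ge (-lam) (-mu) (neg_ne_zero.mpr hmu)
    (by rwa [neg_div_neg_eq]) p U hU (-T)
  exact ⟨-t, by linarith, by rw [hopfFlow_neg]; exact htU⟩


/-- if `μ ≠ 0` and `λ/μ` is irrational, every point of `ℂ²` is recurrent
for `φ_t(z₁, z₂) = (e^{iλt} z₁, e^{iμt} z₂)`: it belongs to its ω-limit set and to its
α-limit set. -/
theorem hopfFlow_recurrent (lam mu : ℝ) (hmu : mu ≠ 0) (hirr : Irrational (lam / mu))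
    (p : ℂ × ℂ) :
    p ∈ omegaLimit Filter.atTop (hopfFlow lam mu) {p} ∧
    p ∈ omegaLimit Filter.atBot (hopfFlow lam mu) {p} := by
  constructor
  · rw [mem_omegaLimit_iff_frequently]
    intro U hU
    rw [Filter.frequently_atTop]
    intro T
    obtain ⟨t, ht, htU⟩ := hopf_exists_ge lam mu hmu hirr p U hU T
    exact ⟨t, ht, ⟨p, by simpa using htU⟩⟩
  · rw [mem_omegaLimit_iff_frequently]
    intro U hU
    rw [Filter.frequently_atBot]
    intro T
    obtain ⟨t, ht, htU⟩ := hopf_exists_le lam mu hmu hirr p U hU T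
    exact ⟨t, ht, ⟨p, by simpa using htU⟩⟩
end

section
/- Let X be a topological space and φ : ℝ → X → X a family of maps satisfying φ_0 = id and φ_{t+s} = φ_t ∘ φ_s for all t, s ∈ ℝ, such that for every x ∈ X the forward orbit {φ_t(x) : t ≥ 0} is dense in X. Then φ has no attractor: there do not exist a proper subset A ⊊ X and a nonempty open set U ⊆ X with closure(φ_t(U)) ⊆ U for every t > 0 and A = ⋂_{t ≥ 0} closure(φ_t(U)). -/
/-- a flow all of whose forward orbits are dense has no attractor:
there is no proper subset `A` and nonempty open attractor block `U`
(`closure (φ_t '' U) ⊆ U` for all `t > 0`) with `A = ⋂_{t ≥ 0} closure (φ_t '' U)`. -/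
theorem no_attractor_of_dense_orbits {X : Type*} [TopologicalSpace X]
    (φ : ℝ → X → X) (h0 : φ 0 = id) (hadd : ∀ t s : ℝ, φ (t + s) = φ t ∘ φ s)
    (hdense : ∀ x : X, Dense {y : X | ∃ t : ℝ, 0 ≤ t ∧ y = φ t x}) :
    ¬ ∃ (A U : Set X), A ≠ Set.univ ∧ U.Nonempty ∧ IsOpen U ∧
        (∀ t > (0 : ℝ), closure (φ t '' U) ⊆ U) ∧
        A = ⋂ t ∈ Set.Ici (0 : ℝ), closure (φ t '' U) := by
  rintro ⟨A, U, hA, ⟨x, hx⟩, -, hblock, hAeq⟩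
  -- the forward orbit of x stays in U
  have horb : ∀ r : ℝ, 0 ≤ r → φ r x ∈ U := by
    intro r hr
    rcases eq_or_lt_of_le hr with h | h
    · subst h; simp [h0]; exact hx
    · exact hblock r h (subset_closure ⟨x, hx, rfl⟩)
  apply hA
  rw [hAeq]
  apply Set.eq_univ_of_forall
  intro y
  simp only [Set.mem_iInter, Set.mem_Ici]
  intro t ht
  -- the forward orbit of φ t x lies in φ t '' U and is dense
  have hsub : {z : X | ∃ r : ℝ, 0 ≤ r ∧ z = φ r (φ t x)} ⊆ φ t '' U := by
    rintro z ⟨r, hr, rfl⟩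
    have : φ r (φ t x) = φ t (φ r x) := by
      have h1 := hadd r t; have h2 := hadd t r
      rw [add_comm] at h1
      calc φ r (φ t x) = φ (t + r) x := by rw [h1]; rfl
        _ = φ t (φ r x) := by rw [h2]; rfl
    rw [this]
    exact ⟨φ r x, horb r hr, rfl⟩
  have := (hdense (φ t x)).mono hsub
  exact this.closure_eq ▸ trivial
end

section
/- Let λ, μ ∈ ℝ with λ ≠ 0, μ ≠ 0 and λ/μ irrational, and let φ be the flow on the unit sphere X = {(z₁, z₂) ∈ ℂ² : |z₁|² + |z₂|² = 1} given by φ_t(z₁, z₂) = (e^{iλt} z₁, e^{iμt} z₂). Then φ has no attractor: there do not exist a proper subset A ⊊ X and a nonempty open set U ⊆ X with closure(φ_t(U)) ⊆ U for every t > 0 and A = ⋂_{t ≥ 0} closure(φ_t(U)). -/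
/-- The unit sphere `S³ = {(z₁, z₂) ∈ ℂ² : |z₁|² + |z₂|² = 1}`. -/
def SphereS3 : Type :=
  {z : ℂ × ℂ // ‖z.1‖ ^ 2 + ‖z.2‖ ^ 2 = 1}

noncomputable instance : TopologicalSpace SphereS3 :=
  instTopologicalSpaceSubtype

/-- The flow `φ_t(z₁, z₂) = (e^{iλt} z₁, e^{iμt} z₂)` on the unit sphere `S³ ⊆ ℂ²`. -/
noncomputable def sphereFlow (lam mu : ℝ) (t : ℝ) (z : SphereS3) : SphereS3 :=
  ⟨(Complex.exp ((lam * t : ℝ) * Complex.I) * z.val.1,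
      Complex.exp ((mu * t : ℝ) * Complex.I) * z.val.2), by
    have h := z.property
    rw [norm_mul, norm_mul, Complex.norm_exp_ofReal_mul_I, Complex.norm_exp_ofReal_mul_I,
      one_mul, one_mul]
    exact h⟩

/-!
The flow is the action of the one-parameter subgroup `t ↦ (e^{iλt}, e^{iμt})` of the compact
torus `Circle × Circle`, so every point is recurrent: `x` is a cluster point of `φ_t x` as `t → ∞`.
If `U` is an attractor block and `x ∈ closure U`, then `φ_t x ∈ φ_1 '' U` for all `t > 1`, so
recurrence puts `x` in `closure (φ_1 '' U) ⊆ U`. Thus `U` is clopen, hence all of the connected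
sphere, and then so is `⋂ t ≥ 0, closure (φ_t '' U)`.
-/

open Set Filter

namespace Flow

variable {α : Type*} [TopologicalSpace α] (ϕ : Flow ℝ α)

def IsAttractorBlock (U : Set α) : Prop :=
  U.Nonempty ∧ IsOpen U ∧ ∀ t > (0 : ℝ), closure (ϕ t '' U) ⊆ U

variable {ϕ}

theorem mem_of_mem_closure_of_mapClusterPt {U : Set α}
    (hU : ∀ t > (0 : ℝ), closure (ϕ t '' U) ⊆ U) {x : α} (hx : x ∈ closure U)
    (hrec : MapClusterPt x atTop fun t ↦ ϕ t x) : x ∈ U := by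
  refine hU 1 one_pos (isClosed_closure.mem_of_mapClusterPt hrec ?_)
  filter_upwards [eventually_gt_atTop 1] with t ht
  have hmem : ϕ (t - 1) x ∈ U :=
    hU (t - 1) (sub_pos.2 ht) (image_closure_subset_closure_image (ϕ.continuous_toFun _)
      (mem_image_of_mem _ hx))
  rw [← add_sub_cancel (1 : ℝ) t, ϕ.map_add]
  exact subset_closure (mem_image_of_mem _ hmem)

theorem IsAttractorBlock.eq_univ [ConnectedSpace α] {U : Set α} (hU : ϕ.IsAttractorBlock U)
    (hrec : ∀ x, MapClusterPt x atTop fun t ↦ ϕ t x) : U = univ :=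
  IsClopen.eq_univ ⟨isClosed_of_closure_subset fun x hx ↦
    mem_of_mem_closure_of_mapClusterPt hU.2.2 hx (hrec x), hU.2.1⟩ hU.1

theorem not_exists_attractor [ConnectedSpace α]
    (hrec : ∀ x, MapClusterPt x atTop fun t ↦ ϕ t x) :
    ¬ ∃ (A U : Set α), A ≠ univ ∧ U.Nonempty ∧ IsOpen U ∧
        (∀ t > (0 : ℝ), closure (ϕ t '' U) ⊆ U) ∧
        A = ⋂ t ∈ Ici (0 : ℝ), closure (ϕ t '' U) := by
  rintro ⟨A, U, hA, hUne, hUo, hU, rfl⟩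
  obtain rfl : U = univ := IsAttractorBlock.eq_univ ⟨hUne, hUo, hU⟩ hrec
  refine hA (iInter_eq_univ.2 fun t ↦ iInter_eq_univ.2 fun _ ↦ ?_)
  have hsurj : Function.Surjective (ϕ t) := (ϕ.toHomeomorph t).surjective
  rw [image_univ, hsurj.range_eq, closure_univ]

end Flow

theorem mapClusterPt_pow_smul_atTop {G α : Type*} [Group G] [TopologicalSpace G] [CompactSpace G]
    [IsTopologicalGroup G] [TopologicalSpace α] [MulAction G α] [ContinuousSMul G α]
    (g : G) (x : α) : MapClusterPt x atTop fun n : ℕ ↦ g ^ n • x := by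
  simpa [Function.comp_def] using (mapClusterPt_one_atTop_pow g).continuousAt_comp
    (continuous_id.smul continuous_const).continuousAt (f := fun h : G ↦ h • x)

namespace SphereS3

instance : SMul (Circle × Circle) SphereS3 where
  smul c z := ⟨(c.1 * z.val.1, c.2 * z.val.2), by
    simpa only [norm_mul, Circle.norm_coe, one_mul] using z.property⟩

theorem val_smul (c : Circle × Circle) (z : SphereS3) :
    (c • z).val = (c.1 * z.val.1, c.2 * z.val.2) :=
  rfl

instance : MulAction (Circle × Circle) SphereS3 where
  one_smul z := Subtype.ext <| by simp [val_smul]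
  mul_smul c d z := Subtype.ext <| by simp [val_smul, mul_assoc]

instance : ContinuousSMul (Circle × Circle) SphereS3 :=
  ⟨continuous_induced_rng.2 <| by
    change Continuous fun p : (Circle × Circle) × SphereS3 ↦
      ((p.1.1 : ℂ) * p.2.val.1, (p.1.2 : ℂ) * p.2.val.2)
    fun_prop⟩

theorem sphereFlow_eq_smul (lam mu t : ℝ) (z : SphereS3) :
    sphereFlow lam mu t z = (Circle.exp (lam * t), Circle.exp (mu * t)) • z :=
  Subtype.ext rfl

theorem isConnected_setOf_norm_sq_add_norm_sq :
    IsConnected {z : ℂ × ℂ | ‖z.1‖ ^ 2 + ‖z.2‖ ^ 2 = 1} := by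
  have hrank : 1 < Module.rank ℝ (WithLp 2 (ℂ × ℂ)) := by
    rw [(WithLp.linearEquiv 2 ℝ (ℂ × ℂ)).rank_eq, rank_prod', Complex.rank_real_complex]
    norm_num
  have hsphere : {z : ℂ × ℂ | ‖z.1‖ ^ 2 + ‖z.2‖ ^ 2 = 1} =
      WithLp.homeomorphProd 2 ℂ ℂ '' Metric.sphere 0 1 := by
    ext z
    rw [Homeomorph.image_eq_preimage_symm, mem_preimage, mem_sphere_zero_iff_norm,
      ← pow_eq_one_iff_of_nonneg (norm_nonneg _) two_ne_zero, WithLp.prod_norm_sq_eq_of_L2]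
    rfl
  rw [hsphere]
  exact (isConnected_sphere hrank 0 zero_le_one).image _
    (WithLp.homeomorphProd 2 ℂ ℂ).continuous.continuousOn

instance : ConnectedSpace SphereS3 :=
  isConnected_iff_connectedSpace.mp isConnected_setOf_norm_sq_add_norm_sq

noncomputable def rotationFlow (lam mu : ℝ) : Flow ℝ SphereS3 where
  toFun := sphereFlow lam mu
  cont' := by
    simp only [Function.uncurry_def, sphereFlow_eq_smul]
    fun_prop
  map_add' s t z := by
    rw [sphereFlow_eq_smul, sphereFlow_eq_smul, sphereFlow_eq_smul, smul_smul, Prod.mk_mul_mk,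
      ← Circle.exp_add, ← Circle.exp_add, mul_add, mul_add]
  map_zero' z := by
    simp only [sphereFlow_eq_smul, mul_zero, Circle.exp_zero, Prod.mk_one_one, one_smul]

theorem mapClusterPt_sphereFlow (lam mu : ℝ) (z : SphereS3) :
    MapClusterPt z atTop fun t ↦ sphereFlow lam mu t z := by
  have hpow (n : ℕ) : sphereFlow lam mu n z = (Circle.exp lam, Circle.exp mu) ^ n • z := by
    rw [sphereFlow_eq_smul, mul_comm lam, mul_comm mu, Circle.exp_natCast_mul,
      Circle.exp_natCast_mul, Prod.pow_mk]
  refine .of_comp tendsto_natCast_atTop_atTop ?_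
  simpa only [Function.comp_def, hpow]
    using mapClusterPt_pow_smul_atTop (Circle.exp lam, Circle.exp mu) z

end SphereS3

theorem sphereFlow_no_attractor_general (lam mu : ℝ) :
    ¬ ∃ (A U : Set SphereS3), A ≠ Set.univ ∧ U.Nonempty ∧ IsOpen U ∧
        (∀ t > (0 : ℝ), closure (sphereFlow lam mu t '' U) ⊆ U) ∧
        A = ⋂ t ∈ Set.Ici (0 : ℝ), closure (sphereFlow lam mu t '' U) :=
  (SphereS3.rotationFlow lam mu).not_exists_attractor (SphereS3.mapClusterPt_sphereFlow lam mu)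

/-- if `λ ≠ 0`, `μ ≠ 0` and `λ/μ` is irrational, the flow
`φ_t(z₁, z₂) = (e^{iλt} z₁, e^{iμt} z₂)` on the unit sphere `S³ ⊆ ℂ²` has no
attractor: there is no proper subset `A` and nonempty open attractor block `U` with
`A = ⋂_{t ≥ 0} closure (φ_t '' U)`. -/
theorem sphereFlow_no_attractor (lam mu : ℝ) (hlam : lam ≠ 0) (hmu : mu ≠ 0)
    (hirr : Irrational (lam / mu)) :
    ¬ ∃ (A U : Set SphereS3), A ≠ Set.univ ∧ U.Nonempty ∧ IsOpen U ∧
        (∀ t > (0 : ℝ), closure (sphereFlow lam mu t '' U) ⊆ U) ∧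
        A = ⋂ t ∈ Set.Ici (0 : ℝ), closure (sphereFlow lam mu t '' U) :=
  sphereFlow_no_attractor_general lam mu
end
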